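/- arXiv:0709.4341 — 3 statements merged into one kernel-verified Lean document; each statement's English description precedes it below -/
import Mathlib

section
/- Let S be a group-bound inverse semigroup, let a, b ∈ S¹ and x ∈ S. Then ba·x is defined if and only if both a·x and b·(a·x) are defined; moreover, whenever ba·x is defined, one has ba·x = b·(a·x). (In other words, the partial conjugation maps x ↦ a·x define an action of S¹ on S by partial one-to-one transformations.) -/
/-!
Idempotents of an inverse semigroup commute, so `(ba)⁻¹ = a⁻¹b⁻¹` and, for an idempotent `e`,
`e ≤ (ba)⁻¹(ba) = a⁻¹(b⁻¹b)a` holds iff `e ≤ a⁻¹a` and `aea⁻¹ ≤ b⁻¹b`. The second condition is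
the domain condition of `b` at `a · x`, because `e_{axa⁻¹} = a e_x a⁻¹` whenever `e_x ≤ a⁻¹a`:
conjugation by `a` maps the maximal subgroup at `e_x` onto the one at `a e_x a⁻¹`, and it
carries a power of `x` lying in the former to the same power of `axa⁻¹`. Since `e_x` is unique,
this settles both directions. All of this is applied in `S¹ = WithOne S`, again an inverse
semigroup.
-/

namespace SgConjPaper

/-- `spow x n = x^(n+1)`: positive powers of an element of a semigroup. -/
def spow {S : Type*} [Semigroup S] (x : S) : ℕ → S
  | 0 => x
  | n + 1 => spow x n * x

/-- `a` lies in the maximal subgroup of `S` whose identity is the idempotent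
`e` (i.e. `e` is a two-sided identity for `a` and `a` is invertible over `e`). -/
def InMaxSubgroup {S : Type*} [Semigroup S] (e a : S) : Prop :=
  e * a = a ∧ a * e = a ∧ ∃ b : S, e * b = b ∧ b * e = b ∧ a * b = e ∧ b * a = e

/-- `e` is the idempotent `e_x`: the identity of the maximal subgroup
containing some positive power of `x`. -/
def IsEIdem {S : Type*} [Semigroup S] (x e : S) : Prop :=
  ∃ k : ℕ, InMaxSubgroup e (spow x k)

/-- A semigroup is group-bound if some positive power of every element lies
in a subgroup. -/
def GroupBound (S : Type*) [Semigroup S] : Prop := ∀ x : S, ∃ e : S, IsEIdem x e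

/-- Primary conjugacy: `x = uv`, `y = vu` for some `u, v ∈ S¹`. -/
def PrimConj {S : Type*} [Semigroup S] (x y : S) : Prop :=
  ∃ u v : WithOne S, (x : WithOne S) = u * v ∧ (y : WithOne S) = v * u

/-- Conjugacy `∼`: the transitive closure of primary conjugacy. -/
def SgConj {S : Type*} [Semigroup S] : S → S → Prop := Relation.TransGen PrimConj

/-- Conjugacy in the character sense `≡`: equal traces under every
finite-dimensional complex representation. -/
def CharEq {S : Type*} [Semigroup S] (x y : S) : Prop :=
  ∀ (V : Type) (_ : AddCommGroup V) (_ : Module ℂ V) (_ : FiniteDimensional ℂ V)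
    (φ : S →ₙ* Module.End ℂ V),
    LinearMap.trace ℂ V (φ x) = LinearMap.trace ℂ V (φ y)

/-- A semigroup is regular if for every `a` there is `b` with `a = aba`. -/
def Regular (S : Type*) [Semigroup S] : Prop := ∀ a : S, ∃ b : S, a * b * a = a

/-- `inv` makes `S` an inverse semigroup: `inv a` is the unique inverse of
each element `a`. -/
def IsInverseSemigroup (S : Type*) [Semigroup S] (inv : S → S) : Prop :=
  (∀ a : S, a * inv a * a = a) ∧ (∀ a : S, inv a * a * inv a = inv a) ∧
  (∀ a b : S, a * b * a = a → b * a * b = b → b = inv a)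

open Classical in
/-- Extension of the inverse map to `S¹ = WithOne S` (with `1⁻¹ = 1`). -/
noncomputable def inv₁ {S : Type*} [Semigroup S] (inv : S → S) (a : WithOne S) :
    WithOne S :=
  if h : a = 1 then 1 else ((inv (WithOne.unone h) : S) : WithOne S)

/-- The natural partial order on `S¹`: `a ≥ b` iff `b = a e` for some
idempotent `e`. -/
def NatGe {S : Type*} [Semigroup S] (a b : WithOne S) : Prop :=
  ∃ f : WithOne S, f * f = f ∧ b = a * f

/-- The partial action of `S¹` on `S`: `ActsTo inv a x y` says that `a · x` is
defined (i.e. `a⁻¹ a ≥ e_x`) and that its value `a x a⁻¹` equals `y`. -/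
def ActsTo {S : Type*} [Semigroup S] (inv : S → S) (a : WithOne S) (x y : S) : Prop :=
  (∃ e : S, IsEIdem x e ∧ NatGe (inv₁ inv a * a) (e : WithOne S)) ∧
  (y : WithOne S) = a * (x : WithOne S) * inv₁ inv a

/-- `x ≈_p y`: `y = a · x` or `x = a · y` for some `a ∈ S¹`. -/
def ActConjP {S : Type*} [Semigroup S] (inv : S → S) (x y : S) : Prop :=
  ∃ a : WithOne S, ActsTo inv a x y ∨ ActsTo inv a y x

/-- `≈`, conjugacy in the action sense: the transitive closure of `≈_p`. -/
def ActConj {S : Type*} [Semigroup S] (inv : S → S) : S → S → Prop :=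
  Relation.TransGen (ActConjP inv)

section Spow

variable {M : Type*} [Semigroup M]

theorem spow_succ (x : M) (n : ℕ) : spow x (n + 1) = spow x n * x := rfl

theorem commute_spow (x : M) (n : ℕ) : Commute x (spow x n) := by
  induction n with
  | zero => exact Commute.refl x
  | succ n ih => exact ih.mul_right (Commute.refl x)

theorem spow_mul_spow (x : M) (m n : ℕ) : spow x m * spow x n = spow x (m + n + 1) := by
  induction n with
  | zero => rfl
  | succ n ih => rw [spow_succ, ← mul_assoc, ih]; rfl

theorem spow_spow (x : M) (k l : ℕ) : spow (spow x k) l = spow x (k + l + k * l) := by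
  induction l with
  | zero => rfl
  | succ l ih => rw [spow_succ, ih, spow_mul_spow]; congr 1; ring

theorem spow_mul_eq_of_mul_eq {y g : M} (hy : y * g = y) (n : ℕ) : spow y n * g = spow y n := by
  cases n with
  | zero => exact hy
  | succ n => rw [spow_succ, mul_assoc, hy]

theorem spow_conj {a a' y : M} (hy : y * (a' * a) = y) (n : ℕ) :
    spow (a * y * a') n = a * spow y n * a' := by
  induction n with
  | zero => rfl
  | succ n ih =>
    calc spow (a * y * a') (n + 1) = a * (spow y n * (a' * a)) * y * a' := by
          rw [spow_succ, ih]; simp only [mul_assoc]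
      _ = a * spow y (n + 1) * a' := by rw [spow_mul_eq_of_mul_eq hy, spow_succ, ← mul_assoc a]

theorem mul_spow_mul_eq_spow_mul {e x g : M} (hex : Commute e x) (heg : e * g = e) (n : ℕ) :
    e * spow (x * g) n = spow x n * e := by
  induction n with
  | zero => rw [spow, spow, ← mul_assoc, hex.eq, mul_assoc, heg]
  | succ n ih => rw [spow_succ, spow_succ, ← mul_assoc, ih, mul_assoc, ← mul_assoc e, hex.eq,
      mul_assoc x, heg, ← mul_assoc]

theorem map_spow {N : Type*} [Semigroup N] (f : M →ₙ* N) (x : M) (n : ℕ) :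
    f (spow x n) = spow (f x) n := by
  induction n with
  | zero => rfl
  | succ n ih => rw [spow_succ, map_mul, ih, spow_succ]

end Spow

namespace InMaxSubgroup

variable {M : Type*} [Semigroup M] {e f u v : M}

theorem isIdempotentElem (hu : InMaxSubgroup e u) : IsIdempotentElem e := by
  obtain ⟨heu, -, b, -, -, hub, -⟩ := hu
  calc e * e = e * u * b := by rw [mul_assoc, hub]
    _ = e := by rw [heu, hub]

theorem mul (hu : InMaxSubgroup e u) (hv : InMaxSubgroup e v) : InMaxSubgroup e (u * v) := by
  obtain ⟨heu, hue, b, heb, hbe, hub, hbu⟩ := hu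
  obtain ⟨hev, hve, c, hec, hce, hvc, hcv⟩ := hv
  refine ⟨by rw [← mul_assoc, heu], by rw [mul_assoc, hve], c * b,
    by rw [← mul_assoc, hec], by rw [mul_assoc, hbe], ?_, ?_⟩
  · rw [mul_assoc, ← mul_assoc v, hvc, ← mul_assoc, hue, hub]
  · rw [mul_assoc, ← mul_assoc b, hbu, ← mul_assoc, hce, hcv]

theorem spow (hu : InMaxSubgroup e u) (n : ℕ) : InMaxSubgroup e (spow u n) := by
  induction n with
  | zero => exact hu
  | succ n ih => exact ih.mul hu

theorem unique (he : InMaxSubgroup e u) (hf : InMaxSubgroup f u) : e = f := by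
  obtain ⟨heu, -, b, -, -, -, hbu⟩ := he
  obtain ⟨-, huf, c, -, -, huc, -⟩ := hf
  calc e = b * u * f := by rw [mul_assoc, huf, hbu]
    _ = e * u * c := by rw [hbu, ← huc, ← mul_assoc]
    _ = f := by rw [heu, huc]

theorem commute_of_commute {x : M} (hu : InMaxSubgroup e u) (hxu : Commute x u) :
    Commute e x := by
  obtain ⟨heu, hue, b, -, -, hub, hbu⟩ := hu
  have hex : e * x = b * x * u := by rw [← hbu, mul_assoc, ← hxu.eq, ← mul_assoc]
  have hxe : x * e = u * x * b := by rw [← hub, ← mul_assoc, hxu.eq]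
  calc e * x = b * x * u * e := by rw [hex, mul_assoc _ u, hue]
    _ = e * (x * e) := by rw [← hex, mul_assoc]
    _ = x * e := by rw [hxe, ← mul_assoc, ← mul_assoc, heu]

theorem map {N : Type*} [Semigroup N] (φ : M →ₙ* N) (hu : InMaxSubgroup e u) :
    InMaxSubgroup (φ e) (φ u) := by
  obtain ⟨heu, hue, b, heb, hbe, hub, hbu⟩ := hu
  exact ⟨by rw [← map_mul, heu], by rw [← map_mul, hue], φ b, by rw [← map_mul, heb],
    by rw [← map_mul, hbe], by rw [← map_mul, hub], by rw [← map_mul, hbu]⟩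

end InMaxSubgroup

namespace IsEIdem

variable {M : Type*} [Semigroup M] {x e f : M}

theorem isIdempotentElem (he : IsEIdem x e) : IsIdempotentElem e :=
  he.choose_spec.isIdempotentElem

theorem commute (he : IsEIdem x e) : Commute e x :=
  he.choose_spec.commute_of_commute (commute_spow x _)

theorem unique (he : IsEIdem x e) (hf : IsEIdem x f) : e = f := by
  obtain ⟨k, hk⟩ := he
  obtain ⟨l, hl⟩ := hf
  have hk' := hk.spow l
  have hl' := hl.spow k
  rw [spow_spow] at hk' hl'
  rw [show l + k + l * k = k + l + k * l by ring] at hl'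
  exact hk'.unique hl'

theorem map {N : Type*} [Semigroup N] (φ : M →ₙ* N) (he : IsEIdem x e) : IsEIdem (φ x) (φ e) := by
  obtain ⟨k, hk⟩ := he
  exact ⟨k, map_spow φ x k ▸ hk.map φ⟩

end IsEIdem

namespace IsInverseSemigroup

variable {M : Type*} [Semigroup M] {i : M → M} (h : IsInverseSemigroup M i)
include h

theorem mul_inv_mul (a : M) : a * i a * a = a := h.1 a

theorem inv_mul_inv (a : M) : i a * a * i a = i a := h.2.1 a

theorem eq_inv_of {a b : M} (hab : a * b * a = a) (hba : b * a * b = b) : b = i a :=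
  h.2.2 a b hab hba

theorem inv_inv (a : M) : i (i a) = a :=
  (h.eq_inv_of (h.inv_mul_inv a) (h.mul_inv_mul a)).symm

theorem inv_eq_self {e : M} (he : IsIdempotentElem e) : i e = e :=
  (h.eq_inv_of (by rw [he.eq, he.eq]) (by rw [he.eq, he.eq])).symm

theorem isIdempotentElem_mul_inv (a : M) : IsIdempotentElem (a * i a) := by
  rw [IsIdempotentElem, ← mul_assoc, h.mul_inv_mul]

theorem isIdempotentElem_inv_mul (a : M) : IsIdempotentElem (i a * a) := by
  rw [IsIdempotentElem, ← mul_assoc, h.inv_mul_inv]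

/-- `f (ef)⁻¹ e` is an inverse of `ef`, hence equals `(ef)⁻¹`, which makes `(ef)⁻¹` and so
`ef` idempotent. -/
theorem isIdempotentElem_mul {e f : M} (he : IsIdempotentElem e) (hf : IsIdempotentElem f) :
    IsIdempotentElem (e * f) := by
  set x := i (e * f)
  have hsq : f * x * e * (f * x * e) = f * x * e := by
    calc f * x * e * (f * x * e) = f * (x * (e * f) * x) * e := by simp only [mul_assoc]
      _ = f * x * e := by rw [h.inv_mul_inv]
  have hx : f * x * e = x := by
    refine h.eq_inv_of ?_ ?_
    · calc e * f * (f * x * e) * (e * f) = e * f * x * (e * f) := by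
            simp only [mul_assoc, he.mul_self_mul, hf.mul_self_mul]
        _ = e * f := h.mul_inv_mul _
    · calc f * x * e * (e * f) * (f * x * e) = f * x * e * (f * x * e) := by
            simp only [mul_assoc, he.mul_self_mul, hf.mul_self_mul]
        _ = f * x * e := hsq
  have hxx : IsIdempotentElem x := by rw [IsIdempotentElem, ← hx, hsq]
  rw [← h.inv_inv (e * f), h.inv_eq_self hxx]
  exact hxx

theorem commute_of_isIdempotentElem {e f : M} (he : IsIdempotentElem e)
    (hf : IsIdempotentElem f) : Commute e f := by
  have hef := h.isIdempotentElem_mul he hf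
  have hfe := h.isIdempotentElem_mul hf he
  refine (h.inv_eq_self hef).symm.trans (h.eq_inv_of ?_ ?_).symm
  · calc e * f * (f * e) * (e * f) = e * f * (e * f) := by
          simp only [mul_assoc, he.mul_self_mul, hf.mul_self_mul]
      _ = e * f := hef.eq
  · calc f * e * (e * f) * (f * e) = f * e * (f * e) := by
          simp only [mul_assoc, he.mul_self_mul, hf.mul_self_mul]
      _ = f * e := hfe.eq

theorem inv_mul_rev (a b : M) : i (a * b) = i b * i a := by
  have hc := h.commute_of_isIdempotentElem (h.isIdempotentElem_mul_inv b)
    (h.isIdempotentElem_inv_mul a)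
  refine (h.eq_inv_of ?_ ?_).symm
  · calc a * b * (i b * i a) * (a * b) = a * (b * i b * (i a * a)) * b := by
          simp only [mul_assoc]
      _ = a * i a * a * (b * i b * b) := by rw [hc.eq]; simp only [mul_assoc]
      _ = a * b := by rw [h.mul_inv_mul, h.mul_inv_mul]
  · calc i b * i a * (a * b) * (i b * i a) = i b * (i a * a * (b * i b)) * i a := by
          simp only [mul_assoc]
      _ = i b * b * i b * (i a * a * i a) := by rw [← hc.eq]; simp only [mul_assoc]
      _ = i b * i a := by rw [h.inv_mul_inv, h.inv_mul_inv]

theorem exists_idem_mul_eq_mul_idem {g : M} (hg : IsIdempotentElem g) (s : M) :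
    ∃ k, IsIdempotentElem k ∧ g * s = s * k := by
  have hc := h.commute_of_isIdempotentElem hg (h.isIdempotentElem_mul_inv s)
  refine ⟨i s * g * s, ?_, ?_⟩
  · calc i s * g * s * (i s * g * s) = i s * (g * (s * i s)) * g * s := by simp only [mul_assoc]
      _ = i s * s * i s * (g * g) * s := by rw [hc.eq]; simp only [mul_assoc]
      _ = i s * g * s := by rw [h.inv_mul_inv, hg.eq]
  · calc g * s = g * (s * i s) * s := by rw [mul_assoc, h.mul_inv_mul]
      _ = s * (i s * g * s) := by rw [hc.eq]; simp only [mul_assoc]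

end IsInverseSemigroup

section Conj

variable {M : Type*} [Semigroup M] {i : M → M}

theorem IsInverseSemigroup.exists_spow_mul_idem (h : IsInverseSemigroup M i) {g : M}
    (hg : IsIdempotentElem g) (x : M) (n : ℕ) :
    ∃ k, IsIdempotentElem k ∧ spow (x * g) n = spow x n * k := by
  induction n with
  | zero => exact ⟨g, hg, rfl⟩
  | succ n ih =>
    obtain ⟨k, hk, hxk⟩ := ih
    obtain ⟨k', hk', hkx⟩ := h.exists_idem_mul_eq_mul_idem hk x
    refine ⟨k' * g, h.isIdempotentElem_mul hk' hg, ?_⟩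
    rw [spow_succ, hxk, spow_succ, mul_assoc (spow x n), ← mul_assoc k, hkx]
    simp only [mul_assoc]

theorem InMaxSubgroup.conj (h : IsInverseSemigroup M i) {a e u : M} (hu : InMaxSubgroup e u)
    (hge : i a * a * e = e) : InMaxSubgroup (a * e * i a) (a * u * i a) := by
  have he := hu.isIdempotentElem
  have heg : e * (i a * a) = e := by
    rw [(h.commute_of_isIdempotentElem he (h.isIdempotentElem_inv_mul a)).eq, hge]
  have hmul : ∀ X Y, X * e = X → a * X * i a * (a * Y * i a) = a * (X * Y) * i a := by
    intro X Y hX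
    calc a * X * i a * (a * Y * i a) = a * (X * e * (i a * a) * Y) * i a := by
          rw [hX]; simp only [mul_assoc]
      _ = a * (X * Y) * i a := by rw [mul_assoc X, heg, hX]
  obtain ⟨heu, hue, b, heb, hbe, hub, hbu⟩ := hu
  refine ⟨?_, ?_, a * b * i a, ?_, ?_, ?_, ?_⟩
  · rw [hmul _ _ he.eq, heu]
  · rw [hmul _ _ hue, hue]
  · rw [hmul _ _ he.eq, heb]
  · rw [hmul _ _ hbe, hbe]
  · rw [hmul _ _ hue, hub]
  · rw [hmul _ _ hbe, hbu]

/-- With `g = a⁻¹a` one has `(axa⁻¹)^k = a (xg)^k a⁻¹`, and `(xg)^k = x^k` once `x^k` lies in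
the group at `e`: indeed `(xg)^k = x^k k'` for an idempotent `k'`, while `e (xg)^k = x^k e = x^k`. -/
theorem IsEIdem.conj (h : IsInverseSemigroup M i) {a x e : M} (he : IsEIdem x e)
    (hge : i a * a * e = e) : IsEIdem (a * x * i a) (a * e * i a) := by
  obtain ⟨k, hk⟩ := he
  have hg := h.isIdempotentElem_inv_mul a
  have heg : e * (i a * a) = e := by
    rw [(h.commute_of_isIdempotentElem hk.isIdempotentElem hg).eq, hge]
  have hxg : a * (x * (i a * a)) * i a = a * x * i a := by
    simp only [mul_assoc, h.inv_mul_inv]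
  have hpow : spow (x * (i a * a)) k = spow x k := by
    obtain ⟨k', -, hk'⟩ := h.exists_spow_mul_idem hg x k
    calc spow (x * (i a * a)) k = e * spow (x * (i a * a)) k := by
          rw [hk', ← mul_assoc, hk.1]
      _ = spow x k := by rw [mul_spow_mul_eq_spow_mul (IsEIdem.commute ⟨k, hk⟩) heg, hk.2.1]
  refine ⟨k, ?_⟩
  rw [← hxg, spow_conj (by rw [mul_assoc, hg.eq]), hpow]
  exact hk.conj h hge

end Conj

theorem IsInverseSemigroup.inv_mul_mul_eq_iff {M : Type*} [Semigroup M] {i : M → M}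
    (h : IsInverseSemigroup M i) {e : M} (he : IsIdempotentElem e) (a b : M) :
    i (b * a) * (b * a) * e = e ↔
      i a * a * e = e ∧ i b * b * (a * e * i a) = a * e * i a := by
  have hp := h.isIdempotentElem_inv_mul b
  have hc := h.commute_of_isIdempotentElem hp (h.isIdempotentElem_mul_inv a)
  have hdom : i (b * a) * (b * a) * e = i a * (i b * b * (a * e)) := by
    rw [h.inv_mul_rev]; simp only [mul_assoc]
  rw [hdom]
  constructor
  · intro hN
    refine ⟨?_, ?_⟩
    · calc i a * a * e = i a * a * (i a * (i b * b * (a * e))) := by rw [hN]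
        _ = i a * a * i a * (i b * b * (a * e)) := by simp only [mul_assoc]
        _ = e := by rw [h.inv_mul_inv, hN]
    · calc i b * b * (a * e * i a) = i b * b * (a * (i a * (i b * b * (a * e)))) * i a := by
            rw [hN]; simp only [mul_assoc]
        _ = i b * b * (a * i a) * (i b * b) * (a * e) * i a := by simp only [mul_assoc]
        _ = a * i a * (i b * b * (i b * b)) * (a * e) * i a := by
            rw [hc.eq]; simp only [mul_assoc]
        _ = a * (i a * (i b * b * (a * e))) * i a := by rw [hp.eq]; simp only [mul_assoc]
        _ = a * e * i a := by rw [hN]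
  · rintro ⟨hge, hP⟩
    have heg : e * (i a * a) = e := by
      rw [(h.commute_of_isIdempotentElem he (h.isIdempotentElem_inv_mul a)).eq, hge]
    have hae : a * e * i a * (a * e) = a * e := by
      calc a * e * i a * (a * e) = a * (e * (i a * a) * e) := by simp only [mul_assoc]
        _ = a * e := by rw [heg, he.eq]
    calc i a * (i b * b * (a * e)) = i a * (i b * b * (a * e * i a * (a * e))) := by rw [hae]
      _ = i a * (i b * b * (a * e * i a)) * (a * e) := by simp only [mul_assoc]
      _ = i a * a * e * (i a * a) * e := by rw [hP]; simp only [mul_assoc]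
      _ = e := by rw [hge, heg, he.eq]

section WithOne

variable {S : Type*} [Semigroup S] {inv : S → S}

@[simp] theorem inv₁_one : inv₁ inv (1 : WithOne S) = 1 := dif_pos rfl

@[simp] theorem inv₁_coe (s : S) : inv₁ inv (s : WithOne S) = (inv s : WithOne S) := by
  rw [inv₁, dif_neg WithOne.coe_ne_one, WithOne.unone_coe]

theorem IsInverseSemigroup.withOne (h : IsInverseSemigroup S inv) :
    IsInverseSemigroup (WithOne S) (inv₁ inv) := by
  refine ⟨fun a => ?_, fun a => ?_, fun a b hab hba => ?_⟩
  · induction a using WithOne.recOneCoe <;> simp [← WithOne.coe_mul, h.mul_inv_mul]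
  · induction a using WithOne.recOneCoe <;> simp [← WithOne.coe_mul, h.inv_mul_inv]
  · induction a using WithOne.recOneCoe with
    | one => simpa using hab
    | coe s =>
      induction b using WithOne.recOneCoe with
      | one => simp at hba
      | coe t =>
        norm_cast at hab hba
        rw [inv₁_coe, h.eq_inv_of hab hba]

theorem natGe_iff {p q : WithOne S} (hp : IsIdempotentElem p) (hq : IsIdempotentElem q) :
    NatGe p q ↔ p * q = q := by
  refine ⟨?_, fun hpq => ⟨q, hq, hpq.symm⟩⟩
  rintro ⟨f, -, rfl⟩
  rw [← mul_assoc, hp.eq]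

theorem InMaxSubgroup.of_coe {e u : S} (hu : InMaxSubgroup (e : WithOne S) (u : WithOne S)) :
    InMaxSubgroup e u := by
  obtain ⟨heu, hue, b, heb, hbe, hub, hbu⟩ := hu
  induction b using WithOne.recOneCoe with
  | one => simp at heb
  | coe b =>
    norm_cast at heu hue heb hbe hub hbu
    exact ⟨heu, hue, b, heb, hbe, hub, hbu⟩

theorem isEIdem_coe_iff {x e : S} : IsEIdem (x : WithOne S) (e : WithOne S) ↔ IsEIdem x e := by
  refine ⟨fun ⟨k, hk⟩ => ⟨k, ?_⟩, fun he => he.map WithOne.coeMulHom⟩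
  rw [← WithOne.coeMulHom_apply x, ← map_spow] at hk
  exact hk.of_coe

theorem exists_coe_eq_mul_coe_mul (u v : WithOne S) (x : S) :
    ∃ y : S, (y : WithOne S) = u * x * v := by
  induction u using WithOne.recOneCoe <;> induction v using WithOne.recOneCoe <;>
    exact ⟨_, by simp only [one_mul, mul_one, ← WithOne.coe_mul]; rfl⟩

theorem actsTo_iff (h : IsInverseSemigroup S inv) {a : WithOne S} {x y : S} :
    ActsTo inv a x y ↔
      ∃ e : S, IsEIdem x e ∧ inv₁ inv a * a * e = e ∧ (y : WithOne S) = a * x * inv₁ inv a := by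
  have hdom : ∀ e : S, IsEIdem x e →
      (NatGe (inv₁ inv a * a) e ↔ inv₁ inv a * a * e = e) := fun e he =>
    natGe_iff (h.withOne.isIdempotentElem_inv_mul a) (isEIdem_coe_iff.mpr he).isIdempotentElem
  constructor
  · rintro ⟨⟨e, he, hge⟩, hy⟩
    exact ⟨e, he, (hdom e he).mp hge, hy⟩
  · rintro ⟨e, he, hge, hy⟩
    exact ⟨⟨e, he, (hdom e he).mpr hge⟩, hy⟩

theorem actsTo_mul_iff (h : IsInverseSemigroup S inv) {a b : WithOne S} {x z : S} :
    ActsTo inv (b * a) x z ↔ ∃ y, ActsTo inv a x y ∧ ActsTo inv b y z := by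
  have hW := h.withOne
  have hval : ∀ y : S, (y : WithOne S) = a * x * inv₁ inv a →
      b * a * x * inv₁ inv (b * a) = b * y * inv₁ inv b := by
    intro y hy
    rw [hy, hW.inv_mul_rev]
    simp only [mul_assoc]
  simp only [actsTo_iff h]
  constructor
  · rintro ⟨e, he, hdom, hz⟩
    have hE := isEIdem_coe_iff.mpr he
    obtain ⟨hga, hgb⟩ := (hW.inv_mul_mul_eq_iff hE.isIdempotentElem a b).mp hdom
    obtain ⟨y, hy⟩ := exists_coe_eq_mul_coe_mul a (inv₁ inv a) x
    obtain ⟨e', he'⟩ := exists_coe_eq_mul_coe_mul a (inv₁ inv a) e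
    refine ⟨y, ⟨e, he, hga, hy⟩, e', isEIdem_coe_iff.mp ?_, he' ▸ hgb, hz.trans (hval y hy)⟩
    rw [hy, he']
    exact hE.conj hW hga
  · rintro ⟨y, ⟨e, he, hga, hy⟩, e', he', hgb, hz⟩
    have hE := isEIdem_coe_iff.mpr he
    have he'_eq : (e' : WithOne S) = a * e * inv₁ inv a :=
      (isEIdem_coe_iff.mpr he').unique (hy ▸ hE.conj hW hga)
    exact ⟨e, he, (hW.inv_mul_mul_eq_iff hE.isIdempotentElem a b).mpr ⟨hga, he'_eq ▸ hgb⟩,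
      hz.trans (hval y hy).symm⟩

end WithOne

theorem action_well_defined_general {S : Type*} [Semigroup S] (inv : S → S)
    (hinv : IsInverseSemigroup S inv)
    (a b : WithOne S) (x : S) :
    ((∃ z : S, ActsTo inv (b * a) x z) ↔
      ∃ y : S, ActsTo inv a x y ∧ ∃ z : S, ActsTo inv b y z) ∧
    (∀ z : S, ActsTo inv (b * a) x z →
      ∃ y : S, ActsTo inv a x y ∧ ActsTo inv b y z) := by
  simp only [actsTo_mul_iff hinv]
  exact ⟨⟨fun ⟨z, y, hy, hz⟩ => ⟨y, hy, z, hz⟩, fun ⟨y, hy, z, hz⟩ => ⟨z, y, hy, hz⟩⟩,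
    fun _ => id⟩

/-- Lemma 1 (statement 0): for a group-bound inverse semigroup `S`,
`a, b ∈ S¹` and `x ∈ S`, the element `ba · x` is defined iff both `a · x`
and `b · (a · x)` are defined, and in that case `ba · x = b · (a · x)`;
thus `x ↦ a · x` is an action of `S¹` on `S` by partial one-to-one maps. -/
theorem action_well_defined {S : Type*} [Semigroup S] (inv : S → S)
    (hinv : IsInverseSemigroup S inv) (hGB : GroupBound S)
    (a b : WithOne S) (x : S) :
    ((∃ z : S, ActsTo inv (b * a) x z) ↔
      ∃ y : S, ActsTo inv a x y ∧ ∃ z : S, ActsTo inv b y z) ∧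
    (∀ z : S, ActsTo inv (b * a) x z →
      ∃ y : S, ActsTo inv a x y ∧ ActsTo inv b y z) :=
  action_well_defined_general inv hinv a b x

end SgConjPaper
end

section
/- Let S be a group-bound semigroup and a ∈ S. Then for every finite-dimensional complex representation φ of S one has χ_φ(a) = χ_φ(a·e_a); that is, a ≡ a e_a. -/
namespace SgConjPaper

lemma trace_aux {V : Type} [AddCommGroup V] [Module ℂ V] [FiniteDimensional ℂ V]
    (A E B : Module.End ℂ V) (n : ℕ)
    (h1 : A ^ (n + 1) * E = A ^ (n + 1)) (h2 : B * A ^ (n + 1) = E) :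
    LinearMap.trace ℂ V A = LinearMap.trace ℂ V (A * E) := by
  set F : Module.End ℂ V := 1 - E with hF
  have hXF : A ^ (n + 1) * F = 0 := by rw [hF, mul_sub, mul_one, h1, sub_self]
  have hEAF : E * (A * F) = 0 := by
    rw [← h2, mul_assoc, ← mul_assoc (A ^ (n+1)), ← pow_succ, pow_succ', mul_assoc,
      hXF, mul_zero, mul_zero]
  have hFAF : F * (A * F) = A * F := by
    rw [hF, sub_mul, one_mul, hEAF, sub_zero]
  have hpow : ∀ m, (A * F) ^ (m + 1) = A ^ m * (A * F) := by
    intro m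
    induction m with
    | zero => simp
    | succ m ih =>
      calc (A * F) ^ (m + 1 + 1) = (A * F) ^ (m + 1) * (A * F) := pow_succ _ _
        _ = A ^ m * (A * F) * (A * F) := by rw [ih]
        _ = A ^ m * (A * (F * (A * F))) := by rw [mul_assoc, mul_assoc]
        _ = A ^ m * (A * (A * F)) := by rw [hFAF]
        _ = A ^ (m + 1) * (A * F) := by rw [pow_succ, mul_assoc]
  have hnil : IsNilpotent (A * F) := by
    refine ⟨n + 2, ?_⟩
    rw [hpow (n + 1), ← mul_assoc, ← pow_succ, pow_succ', mul_assoc, hXF, mul_zero]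
  have htr0 : LinearMap.trace ℂ V (A * F) = 0 :=
    (LinearMap.isNilpotent_trace_of_isNilpotent hnil).eq_zero
  have hsplit : A = A * E + A * F := by rw [hF, mul_sub, mul_one]; abel
  calc LinearMap.trace ℂ V A = LinearMap.trace ℂ V (A * E + A * F) := by rw [← hsplit]
    _ = LinearMap.trace ℂ V (A * E) + LinearMap.trace ℂ V (A * F) := map_add _ _ _
    _ = LinearMap.trace ℂ V (A * E) := by rw [htr0, add_zero]

/-- in a group-bound semigroup, `a ≡ a e_a` for every `a`:
the characters of `a` and `a e_a` agree under every finite-dimensional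
complex representation. -/
theorem charEq_self_mul_eIdem {S : Type*} [Semigroup S] (hGB : GroupBound S)
    (a ea : S) (hea : IsEIdem a ea) : CharEq a (a * ea) := by
  obtain ⟨k, he1, he2, b, hb1, hb2, hb3, hb4⟩ := hea
  intro V _ _ _ φ
  have hspow : ∀ n, φ (spow a n) = (φ a) ^ (n + 1) := by
    intro n
    induction n with
    | zero => simp [spow, pow_one]
    | succ n ih => rw [spow, map_mul, ih, ← pow_succ]
  have h1 : (φ a) ^ (k + 1) * φ ea = (φ a) ^ (k + 1) := by
    rw [← hspow, ← map_mul, he2]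
  have h2 : φ b * (φ a) ^ (k + 1) = φ ea := by
    rw [← hspow, ← map_mul, hb4]
  rw [map_mul]
  exact trace_aux (φ a) (φ ea) (φ b) k h1 h2

end SgConjPaper
end

section
/- Let S be a regular group-bound semigroup with finite D-classes and let a, b ∈ S be such that a e_a ≡ b e_b (their characters agree under every finite-dimensional complex representation of S). Then a e_a and b e_b belong to the same D-class of S. -/
/-!
Write `u = a e_a` and `v = b e_b`, so that `u` lies in the group `H_e` and `v` in `H_f`.
Group-boundedness makes `S` stable: `x ≤_J xy` forces `x R xy`, and dually for `L`. Hence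
left multiplication is a partial action of `S` on the finitely many `H`-classes inside the
`L`-class of `e`, i.e. a representation by `0/1`-matrices whose character counts fixed points.
The element `u` fixes exactly `H_e`, while a fixed point of `v` would give `e ≤_J f`; so unless
`e ≤_J f` the characters of `u` and `v` are `1` and `0`. By symmetry `e` and `f` are
`J`-equivalent, and stability turns this into `e D f`.
-/

namespace SgConjPaper

/-- Green's relation `R`. -/
def RRel {S : Type*} [Semigroup S] (x y : S) : Prop :=
  (∃ u : WithOne S, (x : WithOne S) = y * u) ∧ (∃ v : WithOne S, (y : WithOne S) = x * v)

/-- Green's relation `L`. -/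
def LRel {S : Type*} [Semigroup S] (x y : S) : Prop :=
  (∃ u : WithOne S, (x : WithOne S) = u * y) ∧ (∃ v : WithOne S, (y : WithOne S) = v * x)

/-- Green's relation `D` (= `L ∘ R`). -/
def DRel {S : Type*} [Semigroup S] (x y : S) : Prop := ∃ z : S, LRel x z ∧ RRel z y

/-- Green's relation `H`. -/
def HRel {S : Type*} [Semigroup S] (x y : S) : Prop := LRel x y ∧ RRel x y

/-- All `D`-classes of `S` are finite. -/
def FiniteDClasses (S : Type*) [Semigroup S] : Prop := ∀ x : S, {y : S | DRel x y}.Finite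

section PartialMapMatrix

variable {X : Type*} [Fintype X] [DecidableEq X]

def partialMapMatrix (f : X → Option X) : Matrix X X ℂ :=
  Matrix.of fun i j => if f j = some i then 1 else 0

theorem partialMapMatrix_bind (f g : X → Option X) :
    partialMapMatrix (fun x => (g x).bind f) = partialMapMatrix f * partialMapMatrix g := by
  ext i j
  simp only [partialMapMatrix, Matrix.of_apply, Matrix.mul_apply]
  rcases Option.eq_none_or_eq_some (g j) with hj | ⟨k, hj⟩ <;> simp [hj]

theorem trace_partialMapMatrix (f : X → Option X) :
    (partialMapMatrix f).trace = Fintype.card {x // f x = some x} := by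
  simp [partialMapMatrix, Matrix.trace, Finset.sum_boole, Fintype.card_subtype]

end PartialMapMatrix

theorem CharEq.natCard_fixedPoints_eq {S X : Type*} [Semigroup S] [Finite X] {x y : S}
    (h : CharEq x y) (act : S → X → Option X)
    (hact : ∀ s t p, act (s * t) p = (act t p).bind (act s)) :
    Nat.card {p // act x p = some p} = Nat.card {p // act y p = some p} := by
  classical
  have := Fintype.ofFinite X
  let σ := Fintype.equivFin X
  let φ : S →ₙ* Module.End ℂ (Fin (Fintype.card X) → ℂ) :=
    { toFun s := Matrix.toLin' (Matrix.reindex σ σ (partialMapMatrix (act s)))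
      map_mul' s t := by
        rw [← Matrix.coe_reindexAlgEquiv ℂ ℂ, funext (hact s t), partialMapMatrix_bind, map_mul,
          Matrix.toLin'_mul]
        rfl }
  have htrace (s : S) : LinearMap.trace ℂ _ (φ s) = Nat.card {p // act s p = some p} := by
    change LinearMap.trace ℂ _ (Matrix.toLin' _) = _
    rw [Matrix.trace_toLin'_eq, Nat.card_eq_fintype_card, ← trace_partialMapMatrix]
    exact Fintype.sum_equiv σ.symm _ _ fun _ => rfl
  have := h _ _ _ inferInstance φ
  rw [htrace, htrace] at this
  exact_mod_cast this

theorem CharEq.symm {S : Type*} [Semigroup S] {x y : S} (h : CharEq x y) : CharEq y x :=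
  fun V _ _ hV φ => (h V _ _ hV φ).symm

theorem spow_eq_pow {M : Type*} [Monoid M] (x : M) (n : ℕ) : spow x n = x ^ (n + 1) := by
  induction n with
  | zero => simp [spow]
  | succ n ih => rw [spow, ih, pow_succ x (n + 1)]

theorem eq_pow_mul_mul_pow {M : Type*} [Monoid M] {a p c : M} (h : a = p * a * c) (n : ℕ) :
    a = p ^ n * a * c ^ n := by
  induction n with
  | zero => simp
  | succ n ih =>
    calc a = p ^ n * (p * a * c) * c ^ n := by rw [← h]; exact ih
      _ = p ^ (n + 1) * a * c ^ (n + 1) := by rw [pow_succ p, pow_succ' c]; simp only [mul_assoc]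

section Semigroup

variable {S : Type*} [Semigroup S]

theorem coe_spow (x : S) (n : ℕ) : ((spow x n : S) : WithOne S) = spow (x : WithOne S) n := by
  induction n with
  | zero => rfl
  | succ n ih => rw [spow, spow, WithOne.coe_mul, ih]

theorem commute_spow_self (x : S) (n : ℕ) : Commute (spow x n) x := by
  induction n with
  | zero => exact Commute.refl x
  | succ n ih => exact ih.mul_left (Commute.refl x)

namespace InMaxSubgroup

variable {e g : S}

theorem idem (h : InMaxSubgroup e g) : e * e = e := by
  obtain ⟨heg, -, b, -, -, hgb, -⟩ := h
  calc e * e = e * g * b := by rw [mul_assoc, hgb]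
    _ = e := by rw [heg, hgb]

theorem coe (h : InMaxSubgroup e g) : InMaxSubgroup (e : WithOne S) (g : WithOne S) := by
  obtain ⟨h₁, h₂, b, h₃, h₄, h₅, h₆⟩ := h
  exact ⟨by rw [← WithOne.coe_mul, h₁], by rw [← WithOne.coe_mul, h₂], b,
    by rw [← WithOne.coe_mul, h₃], by rw [← WithOne.coe_mul, h₄], by rw [← WithOne.coe_mul, h₅],
    by rw [← WithOne.coe_mul, h₆]⟩

/-- With `b = g⁻¹` we have `e a = b a g` and `a e = g a b`, hence `e a = e a e = a e`. -/
theorem commute {a : S} (h : InMaxSubgroup e g) (hga : Commute g a) : Commute e a := by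
  obtain ⟨heg, hge, b, -, -, hgb, hbg⟩ := h
  have hea : e * a = b * a * g := by rw [← hbg, mul_assoc, hga.eq, mul_assoc]
  have hae : a * e = g * a * b := by rw [← hgb, ← mul_assoc, hga.eq]
  calc e * a = b * a * (g * e) := by rw [hge, hea]
    _ = e * (a * e) := by rw [← mul_assoc, ← hea, mul_assoc]
    _ = a * e := by rw [hae, ← mul_assoc, ← mul_assoc, heg]

end InMaxSubgroup

theorem GroupBound.withOne (hGB : GroupBound S) : GroupBound (WithOne S) := by
  intro c
  induction c using WithOne.recOneCoe with
  | one => exact ⟨1, 0, by simp [InMaxSubgroup, spow]⟩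
  | coe s =>
    obtain ⟨e, k, hk⟩ := hGB s
    exact ⟨e, k, coe_spow s k ▸ hk.coe⟩

end Semigroup

namespace GroupBound

variable {M : Type*} [Monoid M] (hGB : GroupBound M)
include hGB

theorem exists_eq_mul_mul_right {a p c : M} (h : a = p * a * c) : ∃ d, a = a * c * d := by
  obtain ⟨e, n, -, hge, b, -, -, hgb, -⟩ := hGB c
  rw [spow_eq_pow] at hge hgb
  have hae : a * e = a := by
    rw [eq_pow_mul_mul_pow h (n + 1), mul_assoc, hge]
  exact ⟨c ^ n * b, by rw [mul_assoc a, ← mul_assoc c, ← pow_succ', hgb, hae]⟩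

theorem exists_eq_mul_mul_left {a p c : M} (h : a = c * a * p) : ∃ d, a = d * c * a := by
  obtain ⟨e, n, heg, -, b, -, -, -, hbg⟩ := hGB c
  rw [spow_eq_pow] at heg hbg
  have hea : e * a = a := by
    rw [eq_pow_mul_mul_pow h (n + 1), ← mul_assoc, ← mul_assoc, heg]
  exact ⟨b * c ^ n, by rw [mul_assoc b, ← pow_succ, hbg, hea]⟩

end GroupBound

section Green

variable {S : Type*} [Semigroup S]

def LeJ (x y : S) : Prop := ∃ p q : WithOne S, (x : WithOne S) = p * y * q

theorem LeJ.trans {x y z : S} (hxy : LeJ x y) (hyz : LeJ y z) : LeJ x z := by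
  obtain ⟨p, q, hxy⟩ := hxy
  obtain ⟨p', q', hyz⟩ := hyz
  exact ⟨p * p', q' * q, by rw [hxy, hyz]; simp only [mul_assoc]⟩

theorem leJ_mul_left (x y : S) : LeJ (x * y) y := ⟨x, 1, by rw [WithOne.coe_mul, mul_one]⟩

theorem leJ_mul_right (x y : S) : LeJ (x * y) x := ⟨1, y, by rw [WithOne.coe_mul, one_mul]⟩

namespace LRel

theorem refl (x : S) : LRel x x := ⟨⟨1, (one_mul _).symm⟩, ⟨1, (one_mul _).symm⟩⟩

theorem symm {x y : S} (h : LRel x y) : LRel y x := ⟨h.2, h.1⟩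

theorem trans {x y z : S} (hxy : LRel x y) (hyz : LRel y z) : LRel x z := by
  obtain ⟨⟨u, hu⟩, ⟨v, hv⟩⟩ := hxy
  obtain ⟨⟨u', hu'⟩, ⟨v', hv'⟩⟩ := hyz
  exact ⟨⟨u * u', by rw [hu, hu', mul_assoc]⟩, ⟨v' * v, by rw [hv', hv, mul_assoc]⟩⟩

theorem leJ {x y : S} (h : LRel x y) : LeJ x y := by
  obtain ⟨⟨u, hu⟩, -⟩ := h
  exact ⟨u, 1, by rw [hu, mul_one]⟩

theorem mul_idem {x e : S} (h : LRel x e) (he : e * e = e) : x * e = x := by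
  obtain ⟨⟨u, hu⟩, -⟩ := h
  rw [← WithOne.coe_inj, WithOne.coe_mul, hu, mul_assoc, ← WithOne.coe_mul, he]

end LRel

namespace RRel

theorem refl (x : S) : RRel x x := ⟨⟨1, (mul_one _).symm⟩, ⟨1, (mul_one _).symm⟩⟩

theorem symm {x y : S} (h : RRel x y) : RRel y x := ⟨h.2, h.1⟩

theorem trans {x y z : S} (hxy : RRel x y) (hyz : RRel y z) : RRel x z := by
  obtain ⟨⟨u, hu⟩, ⟨v, hv⟩⟩ := hxy
  obtain ⟨⟨u', hu'⟩, ⟨v', hv'⟩⟩ := hyz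
  exact ⟨⟨u' * u, by rw [hu, hu', mul_assoc]⟩, ⟨v * v', by rw [hv', hv, mul_assoc]⟩⟩

theorem leJ {x y : S} (h : RRel x y) : LeJ x y := by
  obtain ⟨⟨u, hu⟩, -⟩ := h
  exact ⟨1, u, by rw [hu, one_mul]⟩

theorem idem_mul {x e : S} (h : RRel x e) (he : e * e = e) : e * x = x := by
  obtain ⟨⟨u, hu⟩, -⟩ := h
  rw [← WithOne.coe_inj, WithOne.coe_mul, hu, ← mul_assoc, ← WithOne.coe_mul, he]

theorem mul_left {x y : S} (h : RRel x y) (s : S) : RRel (s * x) (s * y) := by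
  obtain ⟨⟨u, hu⟩, ⟨v, hv⟩⟩ := h
  exact ⟨⟨u, by rw [WithOne.coe_mul, WithOne.coe_mul, hu, mul_assoc]⟩,
    ⟨v, by rw [WithOne.coe_mul, WithOne.coe_mul, hv, mul_assoc]⟩⟩

end RRel

namespace GroupBound

variable (hGB : GroupBound S)
include hGB

theorem rRel_of_leJ {a x : S} {q : WithOne S} (hx : (x : WithOne S) = a * q) (h : LeJ a x) :
    RRel x a := by
  obtain ⟨p, q', hp⟩ := h
  obtain ⟨d, hd⟩ := hGB.withOne.exists_eq_mul_mul_right (a := (a : WithOne S)) (p := p)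
    (c := q * q') (by rw [← mul_assoc, mul_assoc p, ← hx]; exact hp)
  refine ⟨⟨q, hx⟩, ⟨q' * d, ?_⟩⟩
  calc (a : WithOne S) = a * (q * q') * d := hd
    _ = (a * q) * (q' * d) := by simp only [mul_assoc]
    _ = x * (q' * d) := by rw [hx]

theorem lRel_of_leJ {a x : S} {p : WithOne S} (hx : (x : WithOne S) = p * a) (h : LeJ a x) :
    LRel x a := by
  obtain ⟨p', q, hp⟩ := h
  obtain ⟨d, hd⟩ := hGB.withOne.exists_eq_mul_mul_left (a := (a : WithOne S)) (p := q)
    (c := p' * p) (by rw [mul_assoc p', ← hx]; exact hp)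
  refine ⟨⟨p, hx⟩, ⟨d * p', ?_⟩⟩
  calc (a : WithOne S) = d * (p' * p) * a := hd
    _ = (d * p') * (p * a) := by simp only [mul_assoc]
    _ = (d * p') * x := by rw [hx]

theorem dRel_of_leJ {e f : S} (hef : LeJ e f) (hfe : LeJ f e) : DRel e f := by
  obtain ⟨p, q, hf⟩ := hfe
  obtain ⟨z, hz⟩ : ∃ z : S, (z : WithOne S) = p * e := by
    induction p using WithOne.recOneCoe with
    | one => exact ⟨e, (one_mul _).symm⟩
    | coe d => exact ⟨d * e, WithOne.coe_mul d e⟩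
  rw [← hz] at hf
  have hze : LRel z e := hGB.lRel_of_leJ hz (hef.trans ⟨1, q, by rw [hf, one_mul]⟩)
  exact ⟨z, hze.symm, (hGB.rRel_of_leJ hf (hze.leJ.trans hef)).symm⟩

end GroupBound

end Green

theorem IsEIdem.idem {S : Type*} [Semigroup S] {a e : S} (h : IsEIdem a e) : e * e = e :=
  h.choose_spec.idem

theorem IsEIdem.hRel_mul {S : Type*} [Semigroup S] {a e : S} (h : IsEIdem a e) :
    HRel (a * e) e := by
  obtain ⟨k, hk⟩ := h
  have hcomm : e * a = a * e := (hk.commute (commute_spow_self a k)).eq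
  have hidem := hk.idem
  obtain ⟨heg, hge, b, -, -, hgb, hbg⟩ := hk
  have hpow : ((spow a k : S) : WithOne S) = (a : WithOne S) ^ (k + 1) := by
    rw [coe_spow, spow_eq_pow]
  refine ⟨⟨⟨a, WithOne.coe_mul a e⟩, ⟨b * (a : WithOne S) ^ k, ?_⟩⟩,
    ⟨⟨(a * e : S), ?_⟩, ⟨(a : WithOne S) ^ k * b, ?_⟩⟩⟩
  · calc (e : WithOne S) = b * (spow a k * e) := by
          rw [← WithOne.coe_mul, hge, ← WithOne.coe_mul, hbg]
      _ = b * (a : WithOne S) ^ k * (a * e) := by rw [hpow, pow_succ]; simp only [mul_assoc]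
  · rw [← WithOne.coe_mul e (a * e), ← mul_assoc, hcomm, mul_assoc, hidem]
  · calc (e : WithOne S) = e * spow a k * b := by
          rw [← WithOne.coe_mul, heg, ← WithOne.coe_mul, hgb]
      _ = (e * a : S) * (a : WithOne S) ^ k * b := by
        rw [hpow, pow_succ', WithOne.coe_mul]; simp only [mul_assoc]
      _ = (a * e : S) * ((a : WithOne S) ^ k * b) := by rw [hcomm]; simp only [mul_assoc]

section LClassAction

variable {S : Type*} [Semigroup S]

/-- Within an `L`-class, the `H`-classes are the `R`-classes. -/
def hSetoidOnLClass (e : S) : Setoid {l : S // LRel l e} where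
  r l l' := RRel (l : S) l'
  iseqv := ⟨fun l => RRel.refl (l : S), RRel.symm, RRel.trans⟩

abbrev HClassesInLClass (e : S) := Quotient (hSetoidOnLClass e)

theorem finite_hClassesInLClass (hD : FiniteDClasses S) (e : S) :
    Finite (HClassesInLClass e) := by
  have : Finite {l : S // LRel l e} :=
    ((hD e).subset fun l hl => ⟨l, LRel.symm hl, RRel.refl l⟩).to_subtype
  exact Quotient.finite _

theorem mul_eq_of_rRel_mul {f s l : S} (hs : f * s = s) (h : RRel (s * l) l) : f * l = l := by
  obtain ⟨-, w, hw⟩ := h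
  rw [← WithOne.coe_inj, WithOne.coe_mul, hw, ← mul_assoc, ← WithOne.coe_mul, ← mul_assoc, hs]

namespace GroupBound

variable (hGB : GroupBound S) {e : S}
include hGB

theorem lRel_mul_of_rRel {l l' s : S} (hl' : LRel l' e) (hll' : RRel l l')
    (hsl : LRel (s * l) e) : LRel (s * l') e :=
  (hGB.lRel_of_leJ (WithOne.coe_mul s l')
    (hl'.leJ.trans (hsl.symm.leJ.trans (hll'.mul_left s).leJ))).trans hl'

theorem lRel_of_lRel_mul {l s t : S} (hl : LRel l e) (h : LRel (s * (t * l)) e) :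
    LRel (t * l) e :=
  (hGB.lRel_of_leJ (WithOne.coe_mul t l)
    (hl.leJ.trans (h.symm.leJ.trans (leJ_mul_left s _)))).trans hl

end GroupBound

open scoped Classical in
noncomputable def lClassAct (hGB : GroupBound S) (e s : S) :
    HClassesInLClass e → Option (HClassesInLClass e) :=
  Quotient.lift
    (fun l => if h : LRel (s * l) e then some (Quotient.mk _ ⟨s * l, h⟩) else none)
    fun l l' (hll' : RRel (l : S) l') => by
      by_cases h : LRel (s * l) e
      · rw [dif_pos h, dif_pos (hGB.lRel_mul_of_rRel l'.2 hll' h)]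
        exact congrArg some (Quotient.sound (hll'.mul_left s))
      · rw [dif_neg h, dif_neg (mt (hGB.lRel_mul_of_rRel l.2 hll'.symm) h)]

variable (hGB : GroupBound S) {e : S}

open scoped Classical in
theorem lClassAct_mk (s : S) (l : {l : S // LRel l e}) :
    lClassAct hGB e s (Quotient.mk _ l) =
      if h : LRel (s * l) e then some (Quotient.mk _ ⟨s * l, h⟩) else none :=
  rfl

theorem lClassAct_mul (s t : S) (q : HClassesInLClass e) :
    lClassAct hGB e (s * t) q = (lClassAct hGB e t q).bind (lClassAct hGB e s) := by
  induction q using Quotient.ind with | _ l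
  by_cases htl : LRel (t * l) e
  · rw [lClassAct_mk, lClassAct_mk, dif_pos htl, Option.bind_some, lClassAct_mk]
    by_cases hstl : LRel (s * (t * l)) e
    · rw [dif_pos hstl, dif_pos (by rwa [mul_assoc])]
      simp only [mul_assoc]
    · rw [dif_neg hstl, dif_neg (by rwa [mul_assoc])]
  · rw [lClassAct_mk, lClassAct_mk, dif_neg htl, Option.bind_none, dif_neg]
    exact fun h => htl (hGB.lRel_of_lRel_mul l.2 (by rwa [← mul_assoc]))

theorem rRel_of_lClassAct_eq_some {s : S} {l : {l : S // LRel l e}}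
    (h : lClassAct hGB e s (Quotient.mk _ l) = some (Quotient.mk _ l)) : RRel (s * l) l := by
  rw [lClassAct_mk] at h
  split_ifs at h
  exact Quotient.exact (Option.some_injective _ h)

theorem lClassAct_eq_some_self_iff {u : S} (he : e * e = e) (hu : HRel u e)
    (q : HClassesInLClass e) :
    lClassAct hGB e u q = some q ↔ q = Quotient.mk _ ⟨e, LRel.refl e⟩ := by
  induction q using Quotient.ind with | _ l
  constructor
  · intro h
    have hel : e * l = l := mul_eq_of_rRel_mul (hu.2.idem_mul he) (rRel_of_lClassAct_eq_some hGB h)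
    exact Quotient.sound (hGB.rRel_of_leJ (by rw [← WithOne.coe_mul, hel]) l.2.symm.leJ)
  · intro h
    rw [h]
    have hue : u * e = u := hu.1.mul_idem he
    rw [lClassAct_mk, dif_pos (by rw [hue]; exact hu.1)]
    exact congrArg some (Quotient.sound (by rw [hue]; exact hu.2 : RRel (u * e) e))

theorem lClassAct_ne_some_self {f v : S} (hf : f * f = f) (hv : RRel v f) (hef : ¬ LeJ e f)
    (q : HClassesInLClass e) : lClassAct hGB e v q ≠ some q := by
  induction q using Quotient.ind with | _ l
  intro h
  have hfl : f * l = l := mul_eq_of_rRel_mul (hv.idem_mul hf) (rRel_of_lClassAct_eq_some hGB h)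
  exact hef (l.2.symm.leJ.trans (hfl ▸ leJ_mul_right f l))

end LClassAction

theorem leJ_of_charEq {S : Type*} [Semigroup S] (hGB : GroupBound S) (hD : FiniteDClasses S)
    {e f u v : S} (he : e * e = e) (hf : f * f = f) (hu : HRel u e) (hv : RRel v f)
    (h : CharEq u v) : LeJ e f := by
  by_contra hef
  have := finite_hClassesInLClass hD e
  have : IsEmpty {q // lClassAct hGB e v q = some q} :=
    ⟨fun q => lClassAct_ne_some_self hGB hf hv hef q.1 q.2⟩
  have hcard := h.natCard_fixedPoints_eq (lClassAct hGB e) (lClassAct_mul hGB)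
  rw [Nat.card_congr (Equiv.subtypeEquivRight (lClassAct_eq_some_self_iff hGB he hu)),
    Nat.card_unique, Nat.card_of_isEmpty] at hcard
  exact one_ne_zero hcard

theorem dRel_of_charEq_general {S : Type*} [Semigroup S]
    (hGB : GroupBound S) (hD : FiniteDClasses S)
    (a b ea eb : S) (hea : IsEIdem a ea) (heb : IsEIdem b eb)
    (hchar : CharEq (a * ea) (b * eb)) : DRel (a * ea) (b * eb) := by
  have ha := hea.hRel_mul
  have hb := heb.hRel_mul
  obtain ⟨z, hz, hz'⟩ := hGB.dRel_of_leJ (leJ_of_charEq hGB hD hea.idem heb.idem ha hb.2 hchar)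
    (leJ_of_charEq hGB hD heb.idem hea.idem hb ha.2 hchar.symm)
  exact ⟨z, ha.1.trans hz, hz'.trans hb.2.symm⟩

/-- in a regular group-bound semigroup with finite
`D`-classes, if `a e_a ≡ b e_b` then `a e_a` and `b e_b` lie in the same
`D`-class. -/
theorem dRel_of_charEq {S : Type*} [Semigroup S]
    (hreg : Regular S) (hGB : GroupBound S) (hD : FiniteDClasses S)
    (a b ea eb : S) (hea : IsEIdem a ea) (heb : IsEIdem b eb)
    (hchar : CharEq (a * ea) (b * eb)) : DRel (a * ea) (b * eb) :=
  dRel_of_charEq_general hGB hD a b ea eb hea heb hchar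

end SgConjPaper
end
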